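/- Let p and q be distinct primes and G a finite non-cyclic {p,q}-group whose enhanced power graph Δ(G) has diameter 2. Then for every element x of order p and every element y of order q, the subgroup ⟨x, y⟩ is cyclic. -/

import Mathlib

/-- `K(G)`: the set of elements `x` such that `⟨x, g⟩` is cyclic for all `g ∈ G`
(the universal vertices of the enhanced power graph together with the identity). -/
def KSet (G : Type*) [Group G] : Set G :=
  {x | ∀ g : G, IsCyclic (Subgroup.closure ({x, g} : Set G))}

/-- A group is generalized quaternion if it is isomorphic to `Q_{2^n}` for some `n ≥ 3`. -/
def IsGeneralizedQuaternion (Q : Type*) [Group Q] : Prop :=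
  ∃ n : ℕ, 3 ≤ n ∧ Nonempty (Q ≃* QuaternionGroup (2 ^ (n - 2)))

/-- The enhanced power graph of `G`: vertices are nonidentity elements, with an edge
between distinct `x` and `y` iff `⟨x, y⟩` is cyclic. -/
def enhancedPowerGraph (G : Type*) [Group G] : SimpleGraph {g : G // g ≠ 1} where
  Adj x y := x ≠ y ∧ IsCyclic (Subgroup.closure ({x.1, y.1} : Set G))
  symm := by
    constructor
    rintro x y ⟨hne, hc⟩
    exact ⟨hne.symm, by rwa [Set.pair_comm]⟩
  loopless := by
    constructor
    intro x
    simp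

/-- In a finite cyclic group, an element of prime order `q` lies in the cyclic subgroup
generated by any element whose order is divisible by `q`. -/
lemma aux_mem_zpowers {H : Type*} [Group H] [Fintype H] [IsCyclic H] {q : ℕ}
    (hq : q.Prime) {a z : H} (ha : orderOf a = q) (hz : q ∣ orderOf z) :
    a ∈ Subgroup.zpowers z := by
  classical
  obtain ⟨t, ht⟩ := hz
  have hz0 : 0 < orderOf z := orderOf_pos z
  have ht0 : 0 < t := by
    rcases Nat.eq_zero_or_pos t with h | h
    · simp [h, ht] at hz0
    · exact h
  set w := z ^ t with hw
  have hwq : orderOf w = q := by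
    rw [hw, orderOf_pow, ht, Nat.gcd_comm, Nat.gcd_eq_left ⟨q, mul_comm q t⟩,
      Nat.mul_div_cancel _ ht0]
  have hsub : ((Subgroup.zpowers w : Subgroup H) : Set H).toFinset ⊆
      ({b : H | b ^ q = 1} : Finset H) := by
    intro g hg
    rw [Set.mem_toFinset] at hg
    have : orderOf g ∣ orderOf w := orderOf_dvd_of_mem_zpowers hg
    simp only [Finset.mem_filter, Finset.mem_univ, true_and, Set.mem_setOf_eq]
    exact orderOf_dvd_iff_pow_eq_one.mp (this.trans (hwq ▸ dvd_refl q))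
  have hcardS : (({b : H | b ^ q = 1} : Finset H)).card ≤ q :=
    IsCyclic.card_pow_eq_one_le hq.pos
  have hcardW : ((Subgroup.zpowers w : Subgroup H) : Set H).toFinset.card = q := by
    rw [Set.toFinset_card]
    simp [Fintype.card_zpowers, hwq]
  have heq : ((Subgroup.zpowers w : Subgroup H) : Set H).toFinset =
      ({b : H | b ^ q = 1} : Finset H) :=
    Finset.eq_of_subset_of_card_le hsub (hcardW ▸ hcardS)
  have haS : a ∈ ({b : H | b ^ q = 1} : Finset H) := by
    simp only [Finset.mem_filter, Finset.mem_univ, true_and, Set.mem_setOf_eq]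
    rw [← ha]; exact pow_orderOf_eq_one a
  rw [← heq, Set.mem_toFinset] at haS
  exact Subgroup.zpowers_le.mpr (Subgroup.mem_zpowers_iff.mpr ⟨(t : ℤ), by simp [hw]⟩) haS

/-- Transfer of the previous lemma to a cyclic closure of a pair in an ambient group. -/
lemma aux_mem_zpowers' {G : Type*} [Group G] [Finite G] {q : ℕ} (hq : q.Prime) {x z : G}
    (h : IsCyclic (Subgroup.closure ({x, z} : Set G))) (hx : orderOf x = q)
    (hdvd : q ∣ orderOf z) : x ∈ Subgroup.zpowers z := by
  classical
  have hxm : x ∈ Subgroup.closure ({x, z} : Set G) := Subgroup.subset_closure (by simp)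
  have hzm : z ∈ Subgroup.closure ({x, z} : Set G) := Subgroup.subset_closure (by simp)
  haveI := Fintype.ofFinite (Subgroup.closure ({x, z} : Set G))
  have key := aux_mem_zpowers hq (a := (⟨x, hxm⟩ : Subgroup.closure ({x, z} : Set G)))
    (z := ⟨z, hzm⟩) (by rw [Subgroup.orderOf_mk]; exact hx)
    (by rw [Subgroup.orderOf_mk]; exact hdvd)
  obtain ⟨k, hk⟩ := Subgroup.mem_zpowers_iff.mp key
  exact Subgroup.mem_zpowers_iff.mpr ⟨k, by
    have := congrArg (Subtype.val) hk
    simpa using this⟩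

/-- If `a` and `b` both lie in `⟨c⟩`, then `⟨a, b⟩` is cyclic. -/
lemma aux_cyclic_closure {G : Type*} [Group G] {c a b : G}
    (hx : a ∈ Subgroup.zpowers c) (hy : b ∈ Subgroup.zpowers c) :
    IsCyclic (Subgroup.closure ({a, b} : Set G)) := by
  haveI : IsCyclic (Subgroup.zpowers c) := by
    refine ⟨⟨⟨c, Subgroup.mem_zpowers c⟩, fun g => ?_⟩⟩
    obtain ⟨k, hk⟩ := Subgroup.mem_zpowers_iff.mp g.2
    exact Subgroup.mem_zpowers_iff.mpr ⟨k, by ext; simpa using hk⟩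
  have hle : Subgroup.closure ({a, b} : Set G) ≤ Subgroup.zpowers c := by
    rw [Subgroup.closure_le]
    rintro g (rfl | rfl) <;> assumption
  exact Subgroup.isCyclic_of_le hle

/-- From a cyclic closure of a pair, extract a common cyclic overgroup generator. -/
lemma exists_zpowers_pair {G : Type*} [Group G] {a b : G}
    (h : IsCyclic (Subgroup.closure ({a, b} : Set G))) :
    ∃ c : G, a ∈ Subgroup.zpowers c ∧ b ∈ Subgroup.zpowers c := by
  obtain ⟨⟨c, hc⟩, hgen⟩ := h.exists_generator
  have key : ∀ g (hg : g ∈ Subgroup.closure ({a, b} : Set G)), g ∈ Subgroup.zpowers c := by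
    intro g hg
    obtain ⟨k, hk⟩ := Subgroup.mem_zpowers_iff.mp (hgen ⟨g, hg⟩)
    exact Subgroup.mem_zpowers_iff.mpr ⟨k, by
      have := congrArg (Subtype.val) hk
      simpa using this⟩
  exact ⟨c, key a (Subgroup.subset_closure (by simp)),
    key b (Subgroup.subset_closure (by simp))⟩

/-- in a finite non-cyclic `{p,q}`-group whose enhanced power graph has
diameter `2`, every element of order `p` is adjacent to every element of order `q`. -/
theorem adj_of_prime_orders (G : Type*) [Group G] [Finite G]
    (p q : ℕ) (hp : p.Prime) (hq : q.Prime) (hpq : p ≠ q)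
    (hfac : (Nat.card G).primeFactors = {p, q}) (hnc : ¬ IsCyclic G)
    (hdiam : (enhancedPowerGraph G).diam = 2) :
    ∀ x y : G, orderOf x = p → orderOf y = q →
      IsCyclic (Subgroup.closure ({x, y} : Set G)) := by
  intro x y hx hy
  by_contra hcyc
  have hx1 : x ≠ 1 := fun h => hp.ne_one (by rw [← hx, h, orderOf_one])
  have hy1 : y ≠ 1 := fun h => hq.ne_one (by rw [← hy, h, orderOf_one])
  have hxy : x ≠ y := fun h => hpq (by rw [← hx, ← hy, h])
  set X : {g : G // g ≠ 1} := ⟨x, hx1⟩ with hX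
  set Y : {g : G // g ≠ 1} := ⟨y, hy1⟩ with hY
  have hXY : X ≠ Y := fun h => hxy (congrArg Subtype.val h)
  have hetop : (enhancedPowerGraph G).ediam ≠ ⊤ := fun h => by
    have := SimpleGraph.diam_eq_zero_of_ediam_eq_top h
    rw [hdiam] at this
    exact two_ne_zero this
  have hreach : (enhancedPowerGraph G).Reachable X Y := by
    rw [← SimpleGraph.edist_ne_top_iff_reachable]
    intro h
    exact hetop (eq_top_iff.mpr (h ▸ SimpleGraph.edist_le_ediam))
  have hdistle : (enhancedPowerGraph G).dist X Y ≤ 2 :=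
    hdiam ▸ SimpleGraph.dist_le_diam hetop
  have hdist0 : (enhancedPowerGraph G).dist X Y ≠ 0 := by
    intro h
    rcases (SimpleGraph.dist_eq_zero_iff_eq_or_not_reachable).mp h with h' | h'
    · exact hXY h'
    · exact h' hreach
  have hdist1 : (enhancedPowerGraph G).dist X Y ≠ 1 := by
    intro h
    have := (SimpleGraph.dist_eq_one_iff_adj).mp h
    exact hcyc this.2
  have hd2 : (enhancedPowerGraph G).dist X Y = 2 := by omega
  obtain ⟨w, hw⟩ := hreach.exists_walk_length_eq_dist
  rw [hd2] at hw
  have h1 : (enhancedPowerGraph G).Adj X (w.getVert 1) := by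
    have := w.adj_getVert_succ (i := 0) (by omega)
    rwa [SimpleGraph.Walk.getVert_zero] at this
  have h2 : (enhancedPowerGraph G).Adj (w.getVert 1) Y := by
    have := w.adj_getVert_succ (i := 1) (by omega)
    rwa [show (1 : ℕ) + 1 = w.length by omega, SimpleGraph.Walk.getVert_length] at this
  set z : G := (w.getVert 1).1 with hzdef
  have hz1 : z ≠ 1 := (w.getVert 1).2
  have hxz : IsCyclic (Subgroup.closure ({x, z} : Set G)) := h1.2
  have hzy : IsCyclic (Subgroup.closure ({z, y} : Set G)) := h2.2
  have hdvd : p ∣ orderOf z ∨ q ∣ orderOf z := by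
    have hzcard : orderOf z ∣ Nat.card G := orderOf_dvd_natCard z
    have hne1 : orderOf z ≠ 1 := by simpa [orderOf_eq_one_iff] using hz1
    obtain ⟨r, hr, hrd⟩ := Nat.exists_prime_and_dvd hne1
    have hmem : r ∈ (Nat.card G).primeFactors :=
      Nat.mem_primeFactors.mpr ⟨hr, hrd.trans hzcard, Nat.card_pos.ne'⟩
    rw [hfac] at hmem
    simp only [Finset.mem_insert, Finset.mem_singleton] at hmem
    rcases hmem with rfl | rfl
    · exact Or.inl hrd
    · exact Or.inr hrd
  rcases hdvd with hdp | hdq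
  · have hxin : x ∈ Subgroup.zpowers z := aux_mem_zpowers' hp hxz hx hdp
    obtain ⟨c, hzc, hyc⟩ := exists_zpowers_pair hzy
    exact hcyc (aux_cyclic_closure (Subgroup.zpowers_le.mpr hzc hxin) hyc)
  · have hyin : y ∈ Subgroup.zpowers z :=
      aux_mem_zpowers' hq (by rwa [Set.pair_comm]) hy hdq
    obtain ⟨c, hxc, hzc⟩ := exists_zpowers_pair hxz
    exact hcyc (aux_cyclic_closure hxc (Subgroup.zpowers_le.mpr hzc hyin))
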